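/- Let $G$ be a group, $H$ a subgroup of index 2, $c \in G \setminus H$, and $\chi \colon H \to K^\times$ a character over an algebraically closed field $K$ with $\chi \neq \chi^c$ (so $\rho := \mathrm{Ind}_H^G \chi$ is irreducible). Then $\mathrm{ad}^0 \rho \cong \eta_H \oplus \mathrm{Ind}_H^G(\chi/\chi^c)$, where $\eta_H$ is the quadratic character of $G$ with kernel $H$. -/

import Mathlib

open scoped Classical

/-- Extend a character `χ` of `H` to a function on `G` by zero. -/
noncomputable def extFun {G K : Type*} [Group G] [Field K] (H : Subgroup G)
    (χ : H →* Kˣ) (g : G) : K :=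
  if h : g ∈ H then (χ ⟨g, h⟩ : K) else 0

/-- The matrices of the representation of `G` induced from a function `f` on `G`
(restricting to a character of `H`), relative to the choice of `c ∉ H`:
`g ↦ diag (f g, f (c⁻¹ g c))` for `g ∈ H`, and the antidiagonal matrix with entries
`f (g c)` and `f (c⁻¹ g)` otherwise. -/
noncomputable def indMat {G K : Type*} [Group G] [Field K] (H : Subgroup G)
    (f : G → K) (c g : G) : Matrix (Fin 2) (Fin 2) K :=
  if g ∈ H then !![f g, 0; 0, f (c⁻¹ * g * c)] else !![0, f (g * c); f (c⁻¹ * g), 0]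

/-- The ratio `χ⁻ = χ / χᶜ`, as a function on `G` (supported on `H`). -/
noncomputable def quotChar {G K : Type*} [Group G] [Field K] (H : Subgroup G)
    (χ : H →* Kˣ) (c g : G) : K :=
  extFun H χ g * (extFun H χ (c⁻¹ * g * c))⁻¹

/-- The matrices of the `3`-dimensional representation `η_H ⊕ Ind_H^G (χ/χᶜ)`. -/
noncomputable def adTarget {G K : Type*} [Group G] [Field K] (H : Subgroup G)
    (χ : H →* Kˣ) (c g : G) : Matrix (Fin 3) (Fin 3) K :=
  !![(if g ∈ H then 1 else -1 : K), 0, 0;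
     0, indMat H (quotChar H χ c) c g 0 0, indMat H (quotChar H χ c) c g 0 1;
     0, indMat H (quotChar H χ c) c g 1 0, indMat H (quotChar H χ c) c g 1 1]

/-!
Take `T = diag (1, χ(c²), 1)`. For `g ∈ H`, `ρ g = diag (a, b)` acts on the coordinates
`(x, y, z)` of a traceless matrix by `diag (1, a/b, b/a)`; this is also the matrix of
`η_H ⊕ Ind (χ/χᶜ)`, because conjugating twice by `c` is conjugation by `c² ∈ H`, which fixes
`χ`, so `(χ/χᶜ)ᶜ = (χ/χᶜ)⁻¹`. For `g ∉ H`, `ρ g` is antidiagonal with entries `p = χ(gc)`,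
`q = χ(c⁻¹g)` and acts by `(x, y, z) ↦ (-x, (p/q) z, (q/p) y)`, while the off-diagonal entries
of the target are `p/(q χ(c²))` and its inverse; `T` absorbs the factor `χ(c²)`.
-/

section ExtFun

variable {G K : Type*} [Group G] [Field K] {H : Subgroup G} (χ : H →* Kˣ) {c g u v : G}

lemma extFun_of_mem (hg : g ∈ H) : extFun H χ g = χ ⟨g, hg⟩ := dif_pos hg

lemma extFun_of_notMem (hg : g ∉ H) : extFun H χ g = 0 := dif_neg hg

lemma extFun_ne_zero (hg : g ∈ H) : extFun H χ g ≠ 0 := by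
  rw [extFun_of_mem χ hg]
  exact Units.ne_zero _

lemma extFun_mul (hu : u ∈ H) (hv : v ∈ H) :
    extFun H χ (u * v) = extFun H χ u * extFun H χ v := by
  rw [extFun_of_mem χ hu, extFun_of_mem χ hv, extFun_of_mem χ (H.mul_mem hu hv), ← Units.val_mul,
    ← map_mul]
  rfl

lemma extFun_inv (hu : u ∈ H) : extFun H χ u⁻¹ = (extFun H χ u)⁻¹ := by
  rw [extFun_of_mem χ hu, extFun_of_mem χ (H.inv_mem hu), ← Units.val_inv_eq_inv_val, ← map_inv]
  rfl

lemma extFun_conj_of_mem (hu : u ∈ H) (g : G) : extFun H χ (u⁻¹ * g * u) = extFun H χ g := by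
  by_cases hg : g ∈ H
  · rw [extFun_mul χ (H.mul_mem (H.inv_mem hu) hg) hu, extFun_mul χ (H.inv_mem hu) hg,
      extFun_inv χ hu]
    field_simp [extFun_ne_zero χ hu]
  · have hconj : u⁻¹ * g * u ∉ H := by
      rwa [H.mul_mem_cancel_right hu, H.mul_mem_cancel_left (H.inv_mem hu)]
    rw [extFun_of_notMem χ hg, extFun_of_notMem χ hconj]

lemma quotChar_conj (hcc : c * c ∈ H) (g : G) :
    quotChar H χ c (c⁻¹ * g * c) = (quotChar H χ c g)⁻¹ := by
  have : c⁻¹ * (c⁻¹ * g * c) * c = (c * c)⁻¹ * g * (c * c) := by group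
  rw [quotChar, quotChar, this, extFun_conj_of_mem χ hcc, mul_inv, inv_inv, mul_comm]

lemma extFun_conj_mul (hcc : c * c ∈ H) (hcg : c⁻¹ * g ∈ H) :
    extFun H χ (c⁻¹ * (g * c) * c) = extFun H χ (c⁻¹ * g) * extFun H χ (c * c) := by
  rw [← extFun_mul χ hcg hcc]
  group

lemma extFun_conj_inv_mul (hcc : c * c ∈ H) (hgc : g * c ∈ H) :
    extFun H χ (c⁻¹ * (c⁻¹ * g) * c) = (extFun H χ (c * c))⁻¹ * extFun H χ (g * c) := by
  rw [← extFun_inv χ hcc, ← extFun_mul χ (H.inv_mem hcc) hgc]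
  group

lemma quotChar_inv_mul (hcc : c * c ∈ H) (hgc : g * c ∈ H) (hcg : c⁻¹ * g ∈ H) :
    quotChar H χ c (c⁻¹ * g) = (quotChar H χ c (g * c))⁻¹ := by
  rw [quotChar, quotChar, extFun_conj_mul χ hcc hcg, extFun_conj_inv_mul χ hcc hgc]
  field_simp [extFun_ne_zero χ hcc]

end ExtFun

namespace Matrix

variable {K : Type*} [Field K]

lemma exists_eq_of_trace_eq_zero_fin_two {X : Matrix (Fin 2) (Fin 2) K} (hX : X.trace = 0) :
    ∃ x y z : K, X = !![x, y; z, -x] := by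
  refine ⟨X 0 0, X 0 1, X 1 0, ?_⟩
  rw [trace_fin_two, add_eq_zero_iff_eq_neg'] at hX
  rw [← hX, ← etaExpand_eq X]
  rfl

lemma conj_diag_traceless {a b : K} (ha : a ≠ 0) (hb : b ≠ 0) (x y z : K) :
    !![a, 0; 0, b] * !![x, y; z, -x] * (!![a, 0; 0, b])⁻¹ = !![x, a / b * y; b / a * z, -x] := by
  rw [inv_eq_right_inv (B := !![a⁻¹, 0; 0, b⁻¹]) (by simp [one_fin_two, ha, hb])]
  ext i j
  fin_cases i <;> fin_cases j <;> simp <;> field_simp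

lemma conj_antidiag_traceless {p q : K} (hp : p ≠ 0) (hq : q ≠ 0) (x y z : K) :
    !![0, p; q, 0] * !![x, y; z, -x] * (!![0, p; q, 0])⁻¹ = !![-x, p / q * z; q / p * y, x] := by
  rw [inv_eq_right_inv (B := !![0, q⁻¹; p⁻¹, 0]) (by simp [one_fin_two, hp, hq])]
  ext i j
  fin_cases i <;> fin_cases j <;> simp <;> field_simp

lemma diagonal_mul_mul_inv_diagonal {n : Type*} [Fintype n] [DecidableEq n] {d : n → K}
    (hd : ∀ i, d i ≠ 0) (A : Matrix n n K) :
    diagonal d * A * (diagonal d)⁻¹ = of fun i j => d i * A i j / d j := by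
  have hinv : (diagonal d)⁻¹ = diagonal fun i => (d i)⁻¹ :=
    inv_eq_right_inv (by simp [diagonal_mul_diagonal, hd])
  rw [hinv]
  ext i j
  simp [mul_diagonal, diagonal_mul, div_eq_mul_inv]

end Matrix

section Target

open Matrix

noncomputable def adBasisChange {G K : Type*} [Group G] [Field K] (H : Subgroup G)
    (χ : H →* Kˣ) (c : G) : Matrix (Fin 3) (Fin 3) K :=
  diagonal ![1, extFun H χ (c * c), 1]

variable {G K : Type*} [Group G] [Field K] {H : Subgroup G} (χ : H →* Kˣ) {c g : G}

lemma adTarget_of_mem (hcc : c * c ∈ H) (hg : g ∈ H) :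
    adTarget H χ c g =
      diagonal ![1, quotChar H χ c g, (quotChar H χ c g)⁻¹] := by
  rw [adTarget, indMat, if_pos hg, if_pos hg, quotChar_conj χ hcc]
  ext i j
  fin_cases i <;> fin_cases j <;> rfl

lemma adTarget_of_notMem (hcc : c * c ∈ H) (hg : g ∉ H) (hgc : g * c ∈ H) (hcg : c⁻¹ * g ∈ H) :
    adTarget H χ c g =
      !![-1, 0, 0; 0, 0, quotChar H χ c (g * c); 0, (quotChar H χ c (g * c))⁻¹, 0] := by
  rw [adTarget, indMat, if_neg hg, if_neg hg, quotChar_inv_mul χ hcc hgc hcg]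
  ext i j
  fin_cases i <;> fin_cases j <;> rfl

lemma isUnit_det_adBasisChange (hcc : c * c ∈ H) : IsUnit (adBasisChange H χ c).det := by
  simp [adBasisChange, Fin.prod_univ_three, extFun_ne_zero χ hcc]

lemma adBasisChange_mul_mul_inv (hcc : c * c ∈ H) (A : Matrix (Fin 3) (Fin 3) K) :
    adBasisChange H χ c * A * (adBasisChange H χ c)⁻¹ =
      of fun i j => ![1, extFun H χ (c * c), 1] i * A i j / ![1, extFun H χ (c * c), 1] j := by
  refine diagonal_mul_mul_inv_diagonal (fun i => ?_) A
  fin_cases i <;> simp [extFun_ne_zero χ hcc]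

lemma adBasisChange_conj_adTarget_mulVec_of_mem (hcc : c * c ∈ H) (hg : g ∈ H) (x y z : K) :
    (adBasisChange H χ c * adTarget H χ c g * (adBasisChange H χ c)⁻¹) *ᵥ ![x, y, z] =
      ![x, extFun H χ g / extFun H χ (c⁻¹ * g * c) * y,
        extFun H χ (c⁻¹ * g * c) / extFun H χ g * z] := by
  have hcomm : Commute (adBasisChange H χ c) (adTarget H χ c g) := by
    rw [adTarget_of_mem χ hcc hg]
    exact commute_diagonal _ _
  rw [hcomm.eq, mul_assoc, mul_nonsing_inv _ (isUnit_det_adBasisChange χ hcc), mul_one,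
    adTarget_of_mem χ hcc hg]
  ext i
  fin_cases i <;> simp [mulVec_diagonal, quotChar, div_eq_mul_inv, mul_comm]

lemma adBasisChange_conj_adTarget_mulVec_of_notMem (hcc : c * c ∈ H) (hg : g ∉ H)
    (hgc : g * c ∈ H) (hcg : c⁻¹ * g ∈ H) (x y z : K) :
    (adBasisChange H χ c * adTarget H χ c g * (adBasisChange H χ c)⁻¹) *ᵥ ![x, y, z] =
      ![-x, extFun H χ (g * c) / extFun H χ (c⁻¹ * g) * z,
        extFun H χ (c⁻¹ * g) / extFun H χ (g * c) * y] := by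
  rw [adBasisChange_mul_mul_inv χ hcc, adTarget_of_notMem χ hcc hg hgc hcg, quotChar,
    extFun_conj_mul χ hcc hcg]
  have := extFun_ne_zero χ hcc
  ext i
  fin_cases i <;> simp [mulVec, dotProduct, Fin.sum_univ_three, div_eq_mul_inv,
    -mul_eq_mul_left_iff, -mul_eq_mul_right_iff] <;> field_simp

end Target

theorem stmt_11_general {G K : Type*} [Group G] [Field K]
    (H : Subgroup G) (hidx : H.index = 2) (c : G) (hc : c ∉ H)
    (χ : H →* Kˣ) :
    ∃ T : Matrix (Fin 3) (Fin 3) K, IsUnit T.det ∧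
      ∀ g : G, ∀ X : Matrix (Fin 2) (Fin 2) K, X.trace = 0 →
        (fun Y : Matrix (Fin 2) (Fin 2) K => ![Y 0 0, Y 0 1, Y 1 0])
            (indMat H (extFun H χ) c g * X * (indMat H (extFun H χ) c g)⁻¹) =
          (T * adTarget H χ c g * T⁻¹).mulVec ![X 0 0, X 0 1, X 1 0] := by
  have hcc : c * c ∈ H := Subgroup.mul_self_mem_of_index_two hidx c
  refine ⟨adBasisChange H χ c, isUnit_det_adBasisChange χ hcc, fun g X hX => ?_⟩
  obtain ⟨x, y, z, rfl⟩ := Matrix.exists_eq_of_trace_eq_zero_fin_two hX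
  by_cases hg : g ∈ H
  · have hconj : c⁻¹ * g * c ∈ H := (Subgroup.normal_of_index_eq_two hidx).conj_mem' g hg c
    rw [indMat, if_pos hg,
      Matrix.conj_diag_traceless (extFun_ne_zero χ hg) (extFun_ne_zero χ hconj),
      adBasisChange_conj_adTarget_mulVec_of_mem χ hcc hg]
    rfl
  · have hgc : g * c ∈ H := (Subgroup.mul_mem_iff_of_index_two hidx).mpr (iff_of_false hg hc)
    have hcg : c⁻¹ * g ∈ H :=
      (Subgroup.mul_mem_iff_of_index_two hidx).mpr (iff_of_false (inv_mem_iff.not.mpr hc) hg)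
    rw [indMat, if_neg hg,
      Matrix.conj_antidiag_traceless (extFun_ne_zero χ hgc) (extFun_ne_zero χ hcg),
      adBasisChange_conj_adTarget_mulVec_of_notMem χ hcc hg hgc hcg]
    rfl

/-- Let `H ≤ G` have index `2`, `c ∉ H`, and `χ : H → Kˣ` a character with
`χ ≠ χᶜ`, over an algebraically closed field `K` of characteristic `≠ 2`.  Then the
adjoint representation `ad⁰ (Ind_H^G χ)` — the conjugation action on trace-zero `2×2`
matrices, read in the coordinates `X ↦ (X₀₀, X₀₁, X₁₀)` — is isomorphic (by a fixed
invertible change of basis `T`) to `η_H ⊕ Ind_H^G (χ/χᶜ)`. -/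
theorem stmt_11 {G K : Type*} [Group G] [Field K] [IsAlgClosed K] (hchar : (2 : K) ≠ 0)
    (H : Subgroup G) (hN : H.Normal) (hidx : H.index = 2) (c : G) (hc : c ∉ H)
    (χ : H →* Kˣ)
    (hne : ∃ h : H, extFun H χ (c⁻¹ * (h : G) * c) ≠ extFun H χ (h : G)) :
    ∃ T : Matrix (Fin 3) (Fin 3) K, IsUnit T.det ∧
      ∀ g : G, ∀ X : Matrix (Fin 2) (Fin 2) K, X.trace = 0 →
        (fun Y : Matrix (Fin 2) (Fin 2) K => ![Y 0 0, Y 0 1, Y 1 0])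
            (indMat H (extFun H χ) c g * X * (indMat H (extFun H χ) c g)⁻¹) =
          (T * adTarget H χ c g * T⁻¹).mulVec ![X 0 0, X 0 1, X 1 0] :=
  stmt_11_general H hidx c hc χ
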